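/- arXiv:1212.6142 — 6 statements merged into one kernel-verified Lean document; each statement's English description precedes it below -/
import Mathlib

section
/- If τ, σ : I → ℝ are differentiable on an open interval I with τ' = σ and σ' = 2τσ, and σ(t₀) = 0 for some t₀ ∈ I, then σ is identically zero on I and τ is constant on I; if σ(t₀) ≠ 0 then σ(t) has the same (strict) sign as σ(t₀) for all t ∈ I, and τ is monotone on I. -/
/-!
The second equation is linear in `σ` with the continuous coefficient `2τ`, so
`σ t = σ t₀ * exp (∫ x in t₀..t, 2 * τ x)`: either `σ` vanishes identically or it keeps the sign
of `σ t₀`. Accordingly `τ' = σ` is identically zero or of constant sign.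
-/

open Set Real

theorem ContinuousOn.hasDerivAt_integral_of_mem_Ioo {a b t₀ t : ℝ} {p : ℝ → ℝ}
    (hp : ContinuousOn p (Ioo a b)) (ht₀ : t₀ ∈ Ioo a b) (ht : t ∈ Ioo a b) :
    HasDerivAt (fun u => ∫ x in t₀..u, p x) (p t) t :=
  intervalIntegral.integral_hasDerivAt_right
    ((hp.mono (ordConnected_Ioo.uIcc_subset ht₀ ht)).intervalIntegrable)
    (hp.stronglyMeasurableAtFilter isOpen_Ioo t ht) (hp.continuousAt (isOpen_Ioo.mem_nhds ht))

theorem eq_mul_exp_integral_of_hasDerivAt {a b t₀ : ℝ} {p y : ℝ → ℝ}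
    (hp : ContinuousOn p (Ioo a b)) (ht₀ : t₀ ∈ Ioo a b)
    (hy : ∀ t ∈ Ioo a b, HasDerivAt y (p t * y t) t) {t : ℝ} (ht : t ∈ Ioo a b) :
    y t = y t₀ * exp (∫ x in t₀..t, p x) := by
  set P : ℝ → ℝ := fun u => ∫ x in t₀..u, p x
  have hg : ∀ u ∈ Ioo a b, HasDerivAt (fun u => y u * exp (-P u)) 0 u := fun u hu =>
    ((hy u hu).mul (hp.hasDerivAt_integral_of_mem_Ioo ht₀ hu).neg.exp).congr_deriv (by ring)
  have hconst : y t * exp (-P t) = y t₀ * exp (-P t₀) :=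
    isOpen_Ioo.is_const_of_deriv_eq_zero isPreconnected_Ioo
      (fun u hu => (hg u hu).differentiableAt.differentiableWithinAt)
      (fun u hu => (hg u hu).deriv) ht ht₀
  simp only [P, intervalIntegral.integral_same, neg_zero, exp_zero, mul_one] at hconst
  rw [← hconst, mul_assoc, ← exp_add, neg_add_cancel, exp_zero, mul_one]

/-- Dichotomy for the system `τ' = σ`, `σ' = 2τσ` on an open interval: if `σ`
vanishes at one point it vanishes identically and `τ` is constant; otherwise
`σ` keeps the strict sign of `σ t₀` and `τ` is monotone. -/
theorem stmt_1 (a b : ℝ) (τ σ : ℝ → ℝ) (t₀ : ℝ) (ht₀ : t₀ ∈ Set.Ioo a b)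
    (hτ : ∀ t ∈ Set.Ioo a b, HasDerivAt τ (σ t) t)
    (hσ : ∀ t ∈ Set.Ioo a b, HasDerivAt σ (2 * τ t * σ t) t) :
    (σ t₀ = 0 →
      (∀ t ∈ Set.Ioo a b, σ t = 0) ∧
      (∀ s ∈ Set.Ioo a b, ∀ t ∈ Set.Ioo a b, τ s = τ t)) ∧
    (0 < σ t₀ → ∀ t ∈ Set.Ioo a b, 0 < σ t) ∧
    (σ t₀ < 0 → ∀ t ∈ Set.Ioo a b, σ t < 0) ∧
    (σ t₀ ≠ 0 → MonotoneOn τ (Set.Ioo a b) ∨ AntitoneOn τ (Set.Ioo a b)) := by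
  have hτ_cont : ContinuousOn τ (Ioo a b) := fun t ht => (hτ t ht).continuousAt.continuousWithinAt
  have hσ_eq (t : ℝ) (ht : t ∈ Ioo a b) : σ t = σ t₀ * exp (∫ x in t₀..t, 2 * τ x) :=
    eq_mul_exp_integral_of_hasDerivAt (continuousOn_const.mul hτ_cont) ht₀ hσ ht
  have hpos (h : 0 < σ t₀) (t : ℝ) (ht : t ∈ Ioo a b) : 0 < σ t :=
    hσ_eq t ht ▸ mul_pos h (exp_pos _)
  have hneg (h : σ t₀ < 0) (t : ℝ) (ht : t ∈ Ioo a b) : σ t < 0 :=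
    hσ_eq t ht ▸ mul_neg_of_neg_of_pos h (exp_pos _)
  have hτ' (t : ℝ) (ht : t ∈ interior (Ioo a b)) :
      HasDerivWithinAt τ (σ t) (interior (Ioo a b)) t :=
    (hτ t (interior_subset ht)).hasDerivWithinAt
  refine ⟨fun h => ?_, hpos, hneg, fun h => ?_⟩
  · have hzero (t : ℝ) (ht : t ∈ Ioo a b) : σ t = 0 := by simp [hσ_eq t ht, h]
    exact ⟨hzero, fun s hs t ht => isOpen_Ioo.is_const_of_deriv_eq_zero isPreconnected_Ioo
      (fun u hu => (hτ u hu).differentiableAt.differentiableWithinAt)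
      (fun u hu => (hτ u hu).deriv.trans (hzero u hu)) hs ht⟩
  · rcases h.lt_or_gt with h | h
    · exact .inr <| antitoneOn_of_hasDerivWithinAt_nonpos (convex_Ioo a b) hτ_cont hτ'
        fun t ht => (hneg h t (interior_subset ht)).le
    · exact .inl <| monotoneOn_of_hasDerivWithinAt_nonneg (convex_Ioo a b) hτ_cont hτ'
        fun t ht => (hpos h t (interior_subset ht)).le
end

section
/- For ρ > 0 and t < 0, the function u(t,s) = −√ρ·sinh(2√ρ·t) / (2(cosh(2√ρ·t) + cosh(√ρ·s))) is positive for all s ∈ ℝ and satisfies the logarithmic diffusion equation ∂u/∂t = ∂²(log u)/∂s². -/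
/-!
Write `τ = 2√ρ t`, `σ = √ρ s`. Both `u_t` and `(log u)_s` are multiples of a function of the
form `x ↦ sinh (k x) / (A + cosh (k x))`, whose derivative is `k (1 + A cosh (k x)) / (A + cosh (k x))²`
because `cosh² - sinh² = 1`. Hence `u_t` and `(log u)_{ss}` both equal
`-ρ (1 + cosh τ cosh σ) / (cosh τ + cosh σ)²`, which is symmetric in `τ` and `σ`.
-/

open Real

theorem hasDerivAt_sinh_div_add_cosh (A k x : ℝ) (h : A + cosh (k * x) ≠ 0) :
    HasDerivAt (fun x => sinh (k * x) / (A + cosh (k * x)))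
      (k * (1 + A * cosh (k * x)) / (A + cosh (k * x)) ^ 2) x := by
  have hkx : HasDerivAt (fun x => k * x) k x := by
    simpa using (hasDerivAt_id x).const_mul k
  refine (hkx.sinh.div (hkx.cosh.const_add A) h).congr_deriv ?_
  field_simp
  linear_combination k * cosh_sq_sub_sinh_sq (k * x)

/-- The sausage conformal factor written with `a = √ρ`. -/
noncomputable def sausage (a t s : ℝ) : ℝ :=
  -a * sinh (2 * a * t) / (2 * (cosh (2 * a * t) + cosh (a * s)))

theorem cosh_add_cosh_pos (x y : ℝ) : 0 < cosh x + cosh y := by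
  positivity

theorem sausage_pos {a t : ℝ} (ha : a ≠ 0) (ht : t < 0) (s : ℝ) : 0 < sausage a t s := by
  have hnum : 0 < -a * sinh (2 * a * t) := by
    rcases ha.lt_or_gt with ha | ha
    · have : 0 < sinh (2 * a * t) := sinh_pos_iff.mpr (by nlinarith)
      nlinarith
    · have : sinh (2 * a * t) < 0 := sinh_neg_iff.mpr (by nlinarith)
      nlinarith
  exact div_pos hnum (by positivity)

theorem hasDerivAt_sausage_time (a t s : ℝ) :
    HasDerivAt (fun t => sausage a t s)
      (-a ^ 2 * (1 + cosh (2 * a * t) * cosh (a * s)) /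
        (cosh (2 * a * t) + cosh (a * s)) ^ 2) t := by
  have hsum := (cosh_add_cosh_pos (a * s) (2 * a * t)).ne'
  have hfun : (fun t => sausage a t s) =
      fun t => -a / 2 * (sinh (2 * a * t) / (cosh (a * s) + cosh (2 * a * t))) := by
    funext t
    rw [sausage, add_comm (cosh _)]
    field_simp
  rw [hfun]
  refine ((hasDerivAt_sinh_div_add_cosh _ _ t hsum).const_mul (-a / 2)).congr_deriv ?_
  rw [add_comm (cosh _)]
  ring

theorem hasDerivAt_log_sausage_space {a t : ℝ} (ha : a ≠ 0) (ht : t ≠ 0) (s : ℝ) :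
    HasDerivAt (fun s => log (sausage a t s))
      (-a * (sinh (a * s) / (cosh (2 * a * t) + cosh (a * s)))) s := by
  have hnum : -a * sinh (2 * a * t) ≠ 0 := by simp [ha, ht]
  have hlog : (fun s => log (sausage a t s)) = fun s =>
      log (-a * sinh (2 * a * t)) - log 2 - log (cosh (2 * a * t) + cosh (a * s)) := by
    funext s
    rw [sausage, log_div hnum (by positivity), log_mul two_ne_zero (cosh_add_cosh_pos _ _).ne']
    ring
  have has : HasDerivAt (fun s => a * s) a s := by
    simpa using (hasDerivAt_id s).const_mul a
  rw [hlog]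
  refine ((hasDerivAt_const s _).sub
    ((has.cosh.const_add _).log (cosh_add_cosh_pos _ _).ne')).congr_deriv ?_
  ring

theorem deriv_deriv_log_sausage_space {a t : ℝ} (ha : a ≠ 0) (ht : t ≠ 0) (s : ℝ) :
    deriv (fun s => deriv (fun s => log (sausage a t s)) s) s =
      -a ^ 2 * (1 + cosh (2 * a * t) * cosh (a * s)) /
        (cosh (2 * a * t) + cosh (a * s)) ^ 2 := by
  have hfirst : deriv (fun s => log (sausage a t s)) = fun s =>
      -a * (sinh (a * s) / (cosh (2 * a * t) + cosh (a * s))) :=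
    funext fun s => (hasDerivAt_log_sausage_space ha ht s).deriv
  rw [hfirst, ((hasDerivAt_sinh_div_add_cosh _ a s
    (cosh_add_cosh_pos _ _).ne').const_mul (-a)).deriv]
  ring

/-- The conformal factor of the sausage metric is positive and solves the
logarithmic diffusion equation `u_t = (log u)_{ss}` for `ρ > 0`, `t < 0`. -/
theorem stmt_13 (ρ : ℝ) (hρ : 0 < ρ) (u : ℝ → ℝ → ℝ)
    (hudef : ∀ t s, u t s =
      -Real.sqrt ρ * Real.sinh (2 * Real.sqrt ρ * t) /
        (2 * (Real.cosh (2 * Real.sqrt ρ * t) + Real.cosh (Real.sqrt ρ * s)))) :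
    ∀ t : ℝ, t < 0 → ∀ s : ℝ,
      0 < u t s ∧
      deriv (fun t' => u t' s) t =
        deriv (fun s' => deriv (fun s'' => Real.log (u t s'')) s') s := by
  intro t ht s
  have hu : u = sausage (√ρ) := funext₂ hudef
  have ha : √ρ ≠ 0 := (sqrt_pos.mpr hρ).ne'
  subst hu
  exact ⟨sausage_pos ha ht s, by
    rw [(hasDerivAt_sausage_time _ t s).deriv, deriv_deriv_log_sausage_space ha ht.ne s]⟩
end

section
/- For t > 0, the function u(t,s) = 2t/(s² + 4t²) is positive on ℝ and satisfies the logarithmic diffusion equation ∂u/∂t = ∂²(log u)/∂s², and the associated curvature R(t,s) = −(1/u)·∂²(log u)/∂s² = (1/t)·(4t² − s²)/(4t² + s²) satisfies −1/t < R(t,s) ≤ 1/t with equality on the right exactly when s = 0. -/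
/-!
Everything is explicit: `log u = log 2t - log (s² + 4t²)`, so `(log u)_s = -2s/(s² + 4t²)` and
`(log u)_ss = (2s² - 8t²)/(s² + 4t²)²`, which is also `u_t`. Dividing by `-u` gives
`R = (1/t)·q` with `q = (4t² - s²)/(4t² + s²)`, and `-1 < q ≤ 1` with `q = 1` only at `s = 0`.
-/

open Real

theorem hasDerivAt_sq_add_const (c s : ℝ) :
    HasDerivAt (fun x : ℝ => x ^ 2 + c) (2 * s) s := by
  simpa using (hasDerivAt_pow 2 s).add_const c

theorem hasDerivAt_log_div_sq_add {a c : ℝ} (ha : a ≠ 0) (hc : 0 < c) (s : ℝ) :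
    HasDerivAt (fun x => log (a / (x ^ 2 + c))) (-2 * s / (s ^ 2 + c)) s := by
  have hpos : 0 < s ^ 2 + c := by positivity
  have h := ((hasDerivAt_const s a).fun_div (hasDerivAt_sq_add_const c s) hpos.ne').log
    (div_ne_zero ha hpos.ne')
  convert h using 1
  field_simp
  ring

theorem hasDerivAt_neg_two_mul_div_sq_add {c : ℝ} (hc : 0 < c) (s : ℝ) :
    HasDerivAt (fun x => -2 * x / (x ^ 2 + c)) ((2 * s ^ 2 - 2 * c) / (s ^ 2 + c) ^ 2) s := by
  have hpos : 0 < s ^ 2 + c := by positivity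
  exact (((hasDerivAt_id' s).const_mul (-2 : ℝ)).fun_div (hasDerivAt_sq_add_const c s)
    hpos.ne').congr_deriv (by ring)

theorem deriv_deriv_log_div_sq_add {a c : ℝ} (ha : a ≠ 0) (hc : 0 < c) (s : ℝ) :
    deriv (fun y => deriv (fun x => log (a / (x ^ 2 + c))) y) s =
      (2 * s ^ 2 - 2 * c) / (s ^ 2 + c) ^ 2 := by
  have h : (fun y => deriv (fun x => log (a / (x ^ 2 + c))) y) =
      fun y => -2 * y / (y ^ 2 + c) :=
    funext fun y => (hasDerivAt_log_div_sq_add ha hc y).deriv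
  rw [h, (hasDerivAt_neg_two_mul_div_sq_add hc s).deriv]

theorem hasDerivAt_two_mul_div_sq_add_four_mul_sq {s t : ℝ} (h : s ^ 2 + 4 * t ^ 2 ≠ 0) :
    HasDerivAt (fun τ => 2 * τ / (s ^ 2 + 4 * τ ^ 2))
      ((2 * s ^ 2 - 8 * t ^ 2) / (s ^ 2 + 4 * t ^ 2) ^ 2) t := by
  have hden : HasDerivAt (fun τ : ℝ => s ^ 2 + 4 * τ ^ 2) (8 * t) t :=
    (((hasDerivAt_pow 2 t).const_mul (4 : ℝ)).const_add (s ^ 2)).congr_deriv (by norm_num; ring)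
  exact (((hasDerivAt_id' t).const_mul (2 : ℝ)).fun_div hden h).congr_deriv (by ring)

section Ratio

variable {a : ℝ} (ha : 0 < a) (s : ℝ)
include ha

theorem add_sq_pos : 0 < a + s ^ 2 := by positivity

theorem neg_one_lt_sub_sq_div_add_sq : -1 < (a - s ^ 2) / (a + s ^ 2) := by
  rw [lt_div_iff₀ (add_sq_pos ha s)]
  linarith

theorem sub_sq_div_add_sq_le_one : (a - s ^ 2) / (a + s ^ 2) ≤ 1 := by
  rw [div_le_one (add_sq_pos ha s)]
  nlinarith [sq_nonneg s]

theorem sub_sq_div_add_sq_eq_one_iff : (a - s ^ 2) / (a + s ^ 2) = 1 ↔ s = 0 := by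
  rw [div_eq_one_iff_eq (add_sq_pos ha s).ne']
  constructor
  · intro h
    exact pow_eq_zero_iff two_ne_zero |>.mp (by linarith)
  · rintro rfl
    ring

end Ratio

/-- The immortal Ricci flow on the punctured plane: `u(t,s) = 2t/(s² + 4t²)`
is positive for `t > 0`, solves `u_t = (log u)_{ss}`, and its curvature
`R = −u⁻¹(log u)_{ss}` equals `(1/t)(4t² − s²)/(4t² + s²)`, with
`−1/t < R ≤ 1/t` and equality on the right exactly when `s = 0`. -/
theorem stmt_14 (u R : ℝ → ℝ → ℝ)
    (hudef : ∀ t s, u t s = 2 * t / (s ^ 2 + 4 * t ^ 2))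
    (hRdef : ∀ t s, R t s =
      -(1 / u t s) * deriv (fun s' => deriv (fun s'' => Real.log (u t s'')) s') s) :
    ∀ t : ℝ, 0 < t → ∀ s : ℝ,
      0 < u t s ∧
      deriv (fun t' => u t' s) t =
        deriv (fun s' => deriv (fun s'' => Real.log (u t s'')) s') s ∧
      R t s = (1 / t) * ((4 * t ^ 2 - s ^ 2) / (4 * t ^ 2 + s ^ 2)) ∧
      -1 / t < R t s ∧ R t s ≤ 1 / t ∧ (R t s = 1 / t ↔ s = 0) := by
  obtain rfl : u = fun t s => 2 * t / (s ^ 2 + 4 * t ^ 2) := funext₂ hudef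
  obtain rfl := funext₂ hRdef
  intro t ht s
  have ha : 0 < 4 * t ^ 2 := by positivity
  have hlog := deriv_deriv_log_div_sq_add (by positivity : (2 * t) ≠ 0) ha s
  have hut := (hasDerivAt_two_mul_div_sq_add_four_mul_sq (s := s) (by positivity)).deriv
  have hR : -(1 / (2 * t / (s ^ 2 + 4 * t ^ 2))) * ((2 * s ^ 2 - 2 * (4 * t ^ 2)) /
      (s ^ 2 + 4 * t ^ 2) ^ 2) = (1 / t) * ((4 * t ^ 2 - s ^ 2) / (4 * t ^ 2 + s ^ 2)) := by
    field_simp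
    ring
  beta_reduce
  rw [hlog, hut, hR]
  have hinv : 0 < 1 / t := by positivity
  refine ⟨by positivity, by ring, rfl, ?_, ?_, ?_⟩
  · rw [neg_div, ← mul_neg_one]
    exact mul_lt_mul_of_pos_left (neg_one_lt_sub_sq_div_add_sq ha s) hinv
  · exact mul_le_of_le_one_right hinv.le (sub_sq_div_add_sq_le_one ha s)
  · rw [mul_eq_left₀ hinv.ne', sub_sq_div_add_sq_eq_one_iff ha s]
end

section
/- For t < 0 and |s| < 2|t|, the function u(t,s) = −2t/(4t² − s²) is positive and satisfies ∂u/∂t = ∂²(log u)/∂s², and the curvature R(t,s) = −(1/u)·∂²(log u)/∂s² = (1/t)·(4t² + s²)/(4t² − s²) satisfies R(t,s) ≤ −1/|t| < 0 with equality exactly when s = 0. -/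
/-! Everything is explicit: `(log u)_s = 2s/(4t² - s²)`, and differentiating once more gives
`2(4t² + s²)/(4t² - s²)²`, which is also `u_t`. Hence `R = (1/t)·q` with
`q = (4t² + s²)/(4t² - s²) ≥ 1`, and `q = 1` exactly when `s = 0`; as `1/t < 0` the bound follows. -/

open Real Topology

noncomputable def annulusConformalFactor (t s : ℝ) : ℝ := -2 * t / (4 * t ^ 2 - s ^ 2)

lemma four_mul_sq_sub_sq_pos_of_abs_lt {t s : ℝ} (h : |s| < 2 * |t|) :
    0 < 4 * t ^ 2 - s ^ 2 := by
  have : s ^ 2 < (2 * t) ^ 2 := sq_lt_sq.mpr (by rwa [abs_mul, abs_two])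
  linarith

section OrderedField

variable {K : Type*} [Field K] [LinearOrder K] [IsStrictOrderedRing K] {a b : K}

lemma one_le_add_div_sub (hab : 0 < a - b) (hb : 0 ≤ b) : 1 ≤ (a + b) / (a - b) := by
  rw [one_le_div hab]
  linarith

lemma add_div_sub_eq_one_iff (hab : a - b ≠ 0) : (a + b) / (a - b) = 1 ↔ b = 0 := by
  rw [div_eq_one_iff_eq hab]
  constructor <;> intro h <;> linarith

end OrderedField

section annulusConformalFactor

variable {t s : ℝ}

lemma annulusConformalFactor_pos (ht : t < 0) (hs : 0 < 4 * t ^ 2 - s ^ 2) :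
    0 < annulusConformalFactor t s :=
  div_pos (by linarith) hs

lemma hasDerivAt_annulusConformalFactor_time (hs : 4 * t ^ 2 - s ^ 2 ≠ 0) :
    HasDerivAt (fun t' => annulusConformalFactor t' s)
      ((8 * t ^ 2 + 2 * s ^ 2) / (4 * t ^ 2 - s ^ 2) ^ 2) t := by
  have hnum : HasDerivAt (fun t' : ℝ => -2 * t') (-2) t := by
    simpa using (hasDerivAt_id t).const_mul (-2)
  have hden : HasDerivAt (fun t' : ℝ => 4 * t' ^ 2 - s ^ 2) (4 * (2 * t)) t := by
    simpa using ((hasDerivAt_pow 2 t).const_mul 4).sub_const (s ^ 2)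
  refine (hnum.div hden hs).congr_deriv ?_
  field_simp
  ring

lemma hasDerivAt_log_annulusConformalFactor (ht : t ≠ 0) (hs : 4 * t ^ 2 - s ^ 2 ≠ 0) :
    HasDerivAt (fun s' => log (annulusConformalFactor t s')) (2 * s / (4 * t ^ 2 - s ^ 2)) s := by
  have hden : HasDerivAt (fun s' : ℝ => 4 * t ^ 2 - s' ^ 2) (-(2 * s)) s := by
    simpa using (hasDerivAt_pow 2 s).const_sub (4 * t ^ 2)
  have hu : annulusConformalFactor t s ≠ 0 := div_ne_zero (by simpa using ht) hs
  refine (((hasDerivAt_const s (-2 * t)).div hden hs).log hu).congr_deriv ?_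
  simp only [Pi.div_apply]
  field_simp
  ring

lemma deriv_deriv_log_annulusConformalFactor (ht : t ≠ 0) (hs : 4 * t ^ 2 - s ^ 2 ≠ 0) :
    deriv (fun s' => deriv (fun s'' => log (annulusConformalFactor t s'')) s') s =
      (8 * t ^ 2 + 2 * s ^ 2) / (4 * t ^ 2 - s ^ 2) ^ 2 := by
  have hnear : ∀ᶠ s' in 𝓝 s, 4 * t ^ 2 - s' ^ 2 ≠ 0 :=
    (continuous_const.sub (continuous_pow 2)).continuousAt.eventually_ne hs
  have hderiv : (fun s' => deriv (fun s'' => log (annulusConformalFactor t s'')) s')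
      =ᶠ[𝓝 s] fun s' => 2 * s' / (4 * t ^ 2 - s' ^ 2) := by
    filter_upwards [hnear] with s' hs'
    exact (hasDerivAt_log_annulusConformalFactor ht hs').deriv
  have hnum : HasDerivAt (fun s' : ℝ => 2 * s') 2 s := by
    simpa using (hasDerivAt_id s).const_mul 2
  have hden : HasDerivAt (fun s' : ℝ => 4 * t ^ 2 - s' ^ 2) (-(2 * s)) s := by
    simpa using (hasDerivAt_pow 2 s).const_sub (4 * t ^ 2)
  rw [hderiv.deriv_eq]
  refine ((hnum.div hden hs).congr_deriv ?_).deriv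
  field_simp
  ring

lemma curvature_annulusConformalFactor (ht : t ≠ 0) :
    -(1 / annulusConformalFactor t s) * ((8 * t ^ 2 + 2 * s ^ 2) / (4 * t ^ 2 - s ^ 2) ^ 2) =
      1 / t * ((4 * t ^ 2 + s ^ 2) / (4 * t ^ 2 - s ^ 2)) := by
  unfold annulusConformalFactor
  field_simp
  ring

end annulusConformalFactor

/-- The ancient Ricci flow on an annulus: for `t < 0` and `|s| < 2|t|`,
`u(t,s) = −2t/(4t² − s²)` is positive, solves `u_t = (log u)_{ss}`, and its
curvature `R = −u⁻¹(log u)_{ss}` equals `(1/t)(4t² + s²)/(4t² − s²)`, with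
`R ≤ −1/|t| < 0` and equality exactly when `s = 0`. -/
theorem stmt_15 (u R : ℝ → ℝ → ℝ)
    (hudef : ∀ t s, u t s = -2 * t / (4 * t ^ 2 - s ^ 2))
    (hRdef : ∀ t s, R t s =
      -(1 / u t s) * deriv (fun s' => deriv (fun s'' => Real.log (u t s'')) s') s) :
    ∀ t : ℝ, t < 0 → ∀ s : ℝ, |s| < 2 * |t| →
      0 < u t s ∧
      deriv (fun t' => u t' s) t =
        deriv (fun s' => deriv (fun s'' => Real.log (u t s'')) s') s ∧
      R t s = (1 / t) * ((4 * t ^ 2 + s ^ 2) / (4 * t ^ 2 - s ^ 2)) ∧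
      R t s ≤ -1 / |t| ∧ -1 / |t| < 0 ∧ (R t s = -1 / |t| ↔ s = 0) := by
  obtain rfl : u = annulusConformalFactor := funext₂ hudef
  intro t ht s hs
  have hd := four_mul_sq_sub_sq_pos_of_abs_lt hs
  have hss := deriv_deriv_log_annulusConformalFactor ht.ne hd.ne'
  have hR : R t s = 1 / t * ((4 * t ^ 2 + s ^ 2) / (4 * t ^ 2 - s ^ 2)) := by
    rw [hRdef, hss, curvature_annulusConformalFactor ht.ne]
  have habs : -1 / |t| = 1 / t := by rw [abs_of_neg ht, neg_div_neg_eq]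
  have hinv : 1 / t < 0 := one_div_neg.mpr ht
  refine ⟨annulusConformalFactor_pos ht hd, ?_, hR, ?_, habs ▸ hinv, ?_⟩
  · rw [(hasDerivAt_annulusConformalFactor_time hd.ne').deriv, hss]
  · rw [hR, habs]
    exact (mul_le_mul_of_nonpos_left (one_le_add_div_sub hd (sq_nonneg s)) hinv.le).trans_eq
      (mul_one _)
  · rw [hR, habs, mul_eq_left₀ hinv.ne, add_div_sub_eq_one_iff hd.ne', sq_eq_zero_iff]
end

section
/- Fix ρ > 0. For all t ∈ ℝ and all s > 2t, the quantity sinh(√ρ·s) − sinh(2√ρ·t) is positive, and the function u(t,s) = √ρ·cosh(2√ρ·t)/(2(sinh(√ρ·s) − sinh(2√ρ·t))) satisfies the logarithmic diffusion equation ∂u/∂t = ∂²(log u)/∂s². Moreover the curvature R = −(1/u)·∂²(log u)/∂s² equals −(2√ρ/cosh(2√ρ t))·(sinh(2√ρ t)·sinh(√ρ s) + 1)/(sinh(√ρ s) − sinh(2√ρ t)) and satisfies R ≤ −2√ρ·tanh(2√ρ t) on the domain s > 2t. -/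
/-! With `a = √ρ`, `S = sinh (a s)` and `c = sinh (2 a t)`, both `∂ₜu` and `∂ₛ² log u` equal
`a² (c S + 1) / (S − c)²`; the two computations agree after using `cosh² − sinh² = 1`.
Multiplying by `−1/u` gives the curvature, and the bound is `(c S + 1) / (S − c) ≥ c`,
which after clearing the positive denominator `S − c` reads `c² + 1 ≥ 0`. -/

open Real Filter Topology

noncomputable def conformalFactor (a t s : ℝ) : ℝ :=
  a * cosh (2 * a * t) / (2 * (sinh (a * s) - sinh (2 * a * t)))

section
variable {a c : ℝ}

theorem hasDerivAt_conformalFactor_time {t s : ℝ} (hne : sinh (a * s) ≠ sinh (2 * a * t)) :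
    HasDerivAt (fun t => conformalFactor a t s)
      (a ^ 2 * (sinh (2 * a * t) * sinh (a * s) + 1) / (sinh (a * s) - sinh (2 * a * t)) ^ 2) t := by
  have hlin := hasDerivAt_const_mul (x := t) (2 * a)
  have hD : sinh (a * s) - sinh (2 * a * t) ≠ 0 := sub_ne_zero.mpr hne
  refine ((hlin.cosh.const_mul a).fun_div ((hlin.sinh.const_sub (sinh (a * s))).const_mul 2)
    (mul_ne_zero two_ne_zero hD)).congr_deriv ?_
  field_simp
  congr 1
  linear_combination a ^ 2 * cosh_sq_sub_sinh_sq (a * 2 * t)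

theorem hasDerivAt_log_conformalFactor_space (ha : a ≠ 0) {t y : ℝ}
    (hne : sinh (a * y) ≠ sinh (2 * a * t)) :
    HasDerivAt (fun y => log (conformalFactor a t y))
      (-(a * cosh (a * y)) / (sinh (a * y) - sinh (2 * a * t))) y := by
  have hD : 2 * (sinh (a * y) - sinh (2 * a * t)) ≠ 0 :=
    mul_ne_zero two_ne_zero (sub_ne_zero.mpr hne)
  have hK : a * cosh (2 * a * t) ≠ 0 := mul_ne_zero ha (cosh_pos _).ne'
  have hden := ((hasDerivAt_const_mul (x := y) a).sinh.sub_const (sinh (2 * a * t))).const_mul 2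
  refine (((hasDerivAt_const y (a * cosh (2 * a * t))).fun_div hden hD).log
    (div_ne_zero hK hD)).congr_deriv ?_
  field_simp
  ring

theorem hasDerivAt_neg_cosh_div_sinh_sub {y : ℝ} (hne : sinh (a * y) ≠ c) :
    HasDerivAt (fun y => -(a * cosh (a * y)) / (sinh (a * y) - c))
      (a ^ 2 * (c * sinh (a * y) + 1) / (sinh (a * y) - c) ^ 2) y := by
  have hlin := hasDerivAt_const_mul (x := y) a
  refine ((hlin.cosh.const_mul a).fun_neg.fun_div (hlin.sinh.sub_const c)
    (sub_ne_zero.mpr hne)).congr_deriv ?_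
  field_simp
  linear_combination a ^ 2 * cosh_sq_sub_sinh_sq (a * y)

theorem deriv_deriv_log_conformalFactor (ha : a ≠ 0) {t s : ℝ}
    (hne : sinh (a * s) ≠ sinh (2 * a * t)) :
    deriv (fun y => deriv (fun z => log (conformalFactor a t z)) y) s =
      a ^ 2 * (sinh (2 * a * t) * sinh (a * s) + 1) / (sinh (a * s) - sinh (2 * a * t)) ^ 2 := by
  have hnear : ∀ᶠ y in 𝓝 s, sinh (a * y) ≠ sinh (2 * a * t) :=
    (continuous_sinh.comp (continuous_const_mul a)).continuousAt.eventually_ne hne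
  have hfirst : (fun y => deriv (fun z => log (conformalFactor a t z)) y) =ᶠ[𝓝 s]
      fun y => -(a * cosh (a * y)) / (sinh (a * y) - sinh (2 * a * t)) :=
    hnear.mono fun y hy => (hasDerivAt_log_conformalFactor_space ha hy).deriv
  rw [hfirst.deriv_eq]
  exact (hasDerivAt_neg_cosh_div_sinh_sub hne).deriv

theorem sinh_two_mul_lt_sinh (ha : 0 < a) {t s : ℝ} (h : 2 * t < s) :
    sinh (2 * a * t) < sinh (a * s) :=
  sinh_lt_sinh.mpr (by nlinarith)

theorem neg_one_div_conformalFactor_mul (ha : a ≠ 0) {t s : ℝ}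
    (hne : sinh (a * s) ≠ sinh (2 * a * t)) :
    -(1 / conformalFactor a t s) *
        (a ^ 2 * (sinh (2 * a * t) * sinh (a * s) + 1) / (sinh (a * s) - sinh (2 * a * t)) ^ 2) =
      -(2 * a / cosh (2 * a * t)) *
        ((sinh (2 * a * t) * sinh (a * s) + 1) / (sinh (a * s) - sinh (2 * a * t))) := by
  have hD : sinh (a * s) - sinh (2 * a * t) ≠ 0 := sub_ne_zero.mpr hne
  have hC : cosh (2 * a * t) ≠ 0 := (cosh_pos _).ne'
  unfold conformalFactor
  field_simp

theorem le_mul_add_one_div_sub {c x : ℝ} (h : c < x) : c ≤ (c * x + 1) / (x - c) :=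
  (le_div_iff₀ (sub_pos.mpr h)).mpr (by nlinarith [sq_nonneg c])

theorem curvature_le_neg_tanh (ha : 0 ≤ a) {t s : ℝ} (hlt : sinh (2 * a * t) < sinh (a * s)) :
    -(2 * a / cosh (2 * a * t)) *
        ((sinh (2 * a * t) * sinh (a * s) + 1) / (sinh (a * s) - sinh (2 * a * t))) ≤
      -2 * a * tanh (2 * a * t) := by
  have hk : 0 ≤ 2 * a / cosh (2 * a * t) := by positivity
  calc -(2 * a / cosh (2 * a * t)) *
          ((sinh (2 * a * t) * sinh (a * s) + 1) / (sinh (a * s) - sinh (2 * a * t)))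
      ≤ -(2 * a / cosh (2 * a * t)) * sinh (2 * a * t) := by
        have := mul_le_mul_of_nonneg_left (le_mul_add_one_div_sub hlt) hk
        linarith
    _ = -2 * a * tanh (2 * a * t) := by rw [tanh_eq_sinh_div_cosh]; ring

end

/-- The eternal Ricci flow of the case `σ < 0`: for `ρ > 0`, `t ∈ ℝ`, `s > 2t`,
`sinh(√ρ s) − sinh(2√ρ t) > 0`, the conformal factor
`u(t,s) = √ρ cosh(2√ρ t)/(2(sinh(√ρ s) − sinh(2√ρ t)))` solves
`u_t = (log u)_{ss}`, and the curvature `R = −u⁻¹(log u)_{ss}` equals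
`−(2√ρ/cosh(2√ρ t))(sinh(2√ρ t)sinh(√ρ s) + 1)/(sinh(√ρ s) − sinh(2√ρ t))`
and is bounded above by `−2√ρ tanh(2√ρ t)`. -/
theorem stmt_17 (ρ : ℝ) (hρ : 0 < ρ) (u R : ℝ → ℝ → ℝ)
    (hudef : ∀ t s, u t s =
      Real.sqrt ρ * Real.cosh (2 * Real.sqrt ρ * t) /
        (2 * (Real.sinh (Real.sqrt ρ * s) - Real.sinh (2 * Real.sqrt ρ * t))))
    (hRdef : ∀ t s, R t s =
      -(1 / u t s) * deriv (fun s' => deriv (fun s'' => Real.log (u t s'')) s') s) :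
    ∀ t : ℝ, ∀ s : ℝ, 2 * t < s →
      0 < Real.sinh (Real.sqrt ρ * s) - Real.sinh (2 * Real.sqrt ρ * t) ∧
      deriv (fun t' => u t' s) t =
        deriv (fun s' => deriv (fun s'' => Real.log (u t s'')) s') s ∧
      R t s =
        -(2 * Real.sqrt ρ / Real.cosh (2 * Real.sqrt ρ * t)) *
          ((Real.sinh (2 * Real.sqrt ρ * t) * Real.sinh (Real.sqrt ρ * s) + 1) /
            (Real.sinh (Real.sqrt ρ * s) - Real.sinh (2 * Real.sqrt ρ * t))) ∧
      R t s ≤ -2 * Real.sqrt ρ * Real.tanh (2 * Real.sqrt ρ * t) := by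
  intro t s hts
  obtain rfl : u = conformalFactor (Real.sqrt ρ) := funext₂ hudef
  have ha : 0 < Real.sqrt ρ := Real.sqrt_pos.mpr hρ
  have hgap := sinh_two_mul_lt_sinh ha hts
  have hlog := deriv_deriv_log_conformalFactor ha.ne' hgap.ne'
  have hR := hRdef t s
  rw [hlog, neg_one_div_conformalFactor_mul ha.ne' hgap.ne'] at hR
  refine ⟨sub_pos.mpr hgap, ?_, hR, hR ▸ curvature_le_neg_tanh ha.le hgap⟩
  rw [(hasDerivAt_conformalFactor_time hgap.ne').deriv, hlog]
end

section
/- Fix ρ > 0 and t < 0 and define R(s) = (−2√ρ/sinh(2√ρ·t))·(cosh(2√ρ·t)·cosh(√ρ·s) + 1)/(cosh(2√ρ·t) + cosh(√ρ·s)) for s ∈ ℝ. Then 0 < −2√ρ·csch(2√ρ·t) ≤ R(s) ≤ −2√ρ·coth(2√ρ·t) for all s, with equality on the left exactly when s = 0, and R(s) → −2√ρ·coth(2√ρ·t) as s → ±∞. -/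
open Real Filter

private lemma cosh_tendsto_atTop : Tendsto Real.cosh atTop atTop := by
  apply tendsto_atTop_mono (fun x => ?_) (tendsto_exp_atTop.atTop_div_const two_pos)
  rw [Real.cosh_eq]
  have := (Real.exp_pos (-x)).le
  linarith

private lemma cosh_tendsto_atBot : Tendsto Real.cosh atBot atTop := by
  have : Real.cosh = fun x => Real.cosh (-x) := by
    funext x; rw [Real.cosh_neg]
  rw [this]
  exact cosh_tendsto_atTop.comp tendsto_neg_atBot_atTop

/-- Curvature bounds for the sausage metric: for `ρ > 0` and `t < 0`, the
curvature `R(s)` satisfies `0 < −2√ρ csch(2√ρ t) ≤ R(s) ≤ −2√ρ coth(2√ρ t)`,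
with equality on the left exactly when `s = 0`, and `R(s)` tends to
`−2√ρ coth(2√ρ t)` as `s → ±∞`. -/
theorem stmt_18 (ρ t : ℝ) (hρ : 0 < ρ) (ht : t < 0) (R : ℝ → ℝ)
    (hRdef : ∀ s, R s =
      (-2 * Real.sqrt ρ / Real.sinh (2 * Real.sqrt ρ * t)) *
        ((Real.cosh (2 * Real.sqrt ρ * t) * Real.cosh (Real.sqrt ρ * s) + 1) /
          (Real.cosh (2 * Real.sqrt ρ * t) + Real.cosh (Real.sqrt ρ * s)))) :
    (∀ s : ℝ,
      0 < -2 * Real.sqrt ρ * (1 / Real.sinh (2 * Real.sqrt ρ * t)) ∧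
      -2 * Real.sqrt ρ * (1 / Real.sinh (2 * Real.sqrt ρ * t)) ≤ R s ∧
      R s ≤ -2 * Real.sqrt ρ * (Real.cosh (2 * Real.sqrt ρ * t) / Real.sinh (2 * Real.sqrt ρ * t)) ∧
      (R s = -2 * Real.sqrt ρ * (1 / Real.sinh (2 * Real.sqrt ρ * t)) ↔ s = 0)) ∧
    Filter.Tendsto R Filter.atTop
      (nhds (-2 * Real.sqrt ρ * (Real.cosh (2 * Real.sqrt ρ * t) / Real.sinh (2 * Real.sqrt ρ * t)))) ∧
    Filter.Tendsto R Filter.atBot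
      (nhds (-2 * Real.sqrt ρ * (Real.cosh (2 * Real.sqrt ρ * t) / Real.sinh (2 * Real.sqrt ρ * t)))) := by
  have hq : 0 < Real.sqrt ρ := Real.sqrt_pos.mpr hρ
  set q := Real.sqrt ρ with hq_def
  have ha : 2 * q * t < 0 := by nlinarith
  set c := Real.cosh (2 * q * t) with hc_def
  set sh := Real.sinh (2 * q * t) with hsh_def
  have hsh : sh < 0 := Real.sinh_neg_iff.mpr ha
  have hsh' : sh ≠ 0 := hsh.ne
  have hc1 : 1 < c := Real.one_lt_cosh.mpr ha.ne
  have hK : 0 < -2 * q * (1 / sh) := by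
    have h1 : 1 / sh < 0 := one_div_neg.mpr hsh
    nlinarith
  have hKeq : -2 * q / sh = -2 * q * (1 / sh) := by ring
  refine ⟨fun s => ?_, ?_, ?_⟩
  · set x := Real.cosh (q * s) with hx_def
    have hx1 : 1 ≤ x := Real.one_le_cosh _
    have hd : 0 < c + x := by linarith
    have hfrac1 : 1 ≤ (c * x + 1) / (c + x) := by
      rw [le_div_iff₀ hd]; nlinarith
    have hfrac2 : (c * x + 1) / (c + x) ≤ c := by
      rw [div_le_iff₀ hd]; nlinarith
    refine ⟨hK, ?_, ?_, ?_⟩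
    · rw [hRdef, hKeq]
      calc -2 * q * (1 / sh) = -2 * q * (1 / sh) * 1 := by ring
        _ ≤ -2 * q * (1 / sh) * ((c * x + 1) / (c + x)) := by
            exact mul_le_mul_of_nonneg_left hfrac1 hK.le
    · rw [hRdef, hKeq]
      calc -2 * q * (1 / sh) * ((c * x + 1) / (c + x))
          ≤ -2 * q * (1 / sh) * c := mul_le_mul_of_nonneg_left hfrac2 hK.le
        _ = -2 * q * (c / sh) := by ring
    · rw [hRdef, hKeq]
      constructor
      · intro h
        have h2 : (c * x + 1) / (c + x) = 1 := by
          have := mul_left_cancel₀ hK.ne' (by linarith [h] : -2 * q * (1 / sh) * ((c * x + 1) / (c + x)) = -2 * q * (1 / sh) * 1)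
          linarith
        rw [div_eq_one_iff_eq hd.ne'] at h2
        have hx : x = 1 := by nlinarith
        have : q * s = 0 := by
          by_contra hqs
          exact absurd hx (Real.one_lt_cosh.mpr hqs).ne'
        exact (mul_eq_zero.mp this).resolve_left hq.ne'
      · intro h
        subst h
        simp [hx_def, Real.cosh_zero]
        field_simp
  · have hRalt : ∀ s, R s = -2 * q * (c / sh) + (-2 * q / sh) * (1 - c ^ 2) / (c + Real.cosh (q * s)) := by
      intro s
      rw [hRdef]
      have hd : 0 < c + Real.cosh (q * s) := by
        have := Real.one_le_cosh (q * s); linarith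
      field_simp
      ring
    have hcomp : Tendsto (fun s => c + Real.cosh (q * s)) atTop atTop := by
      apply tendsto_atTop_add_const_left
      exact cosh_tendsto_atTop.comp (tendsto_id.const_mul_atTop hq)
    have h0 : Tendsto (fun s => (-2 * q / sh) * (1 - c ^ 2) / (c + Real.cosh (q * s))) atTop (nhds 0) :=
      tendsto_const_nhds.div_atTop hcomp
    have hcst : Tendsto (fun _ : ℝ => -2 * q * (c / sh)) atTop (nhds (-2 * q * (c / sh))) := tendsto_const_nhds
    have := hcst.add h0
    rw [add_zero] at this
    exact Tendsto.congr (fun s => (hRalt s).symm) this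
  · have hRalt : ∀ s, R s = -2 * q * (c / sh) + (-2 * q / sh) * (1 - c ^ 2) / (c + Real.cosh (q * s)) := by
      intro s
      rw [hRdef]
      have hd : 0 < c + Real.cosh (q * s) := by
        have := Real.one_le_cosh (q * s); linarith
      field_simp
      ring
    have hcomp : Tendsto (fun s => c + Real.cosh (q * s)) atBot atTop := by
      apply tendsto_atTop_add_const_left
      exact cosh_tendsto_atBot.comp (tendsto_id.const_mul_atBot hq)
    have h0 : Tendsto (fun s => (-2 * q / sh) * (1 - c ^ 2) / (c + Real.cosh (q * s))) atBot (nhds 0) :=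
      tendsto_const_nhds.div_atTop hcomp
    have hcst : Tendsto (fun _ : ℝ => -2 * q * (c / sh)) atBot (nhds (-2 * q * (c / sh))) := tendsto_const_nhds
    have := hcst.add h0
    rw [add_zero] at this
    exact Tendsto.congr (fun s => (hRalt s).symm) this
end
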